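/- arXiv:1710.04893 — 3 statements merged into one kernel-verified Lean document; each statement's English description precedes it below -/
import Mathlib

section
/- Let A be a bounded linear operator on a complex Hilbert space with polar decomposition A = U|A| and let r ≥ 1. Then w(A)^r ≤ (1/2)(‖A‖^r + w(|A|^{1/2} U |A|^{1/2})^r). -/
noncomputable section
open ContinuousLinearMap

variable {H : Type*} [NormedAddCommGroup H] [InnerProductSpace ℂ H] [CompleteSpace H]

/-- The numerical radius of a bounded operator. -/
def nrad (A : H →L[ℂ] H) : ℝ :=
  sSup {r : ℝ | ∃ x : H, ‖x‖ = 1 ∧ r = ‖(inner ℂ (A x) x : ℂ)‖}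

/-- The absolute value |A| = (A*A)^(1/2) via continuous functional calculus. -/
def oabs (A : H →L[ℂ] H) : H →L[ℂ] H := cfc Real.sqrt (adjoint A * A)

/-- The 2×2 block operator matrix [[A,B],[C,D]] on the Hilbert space H ⊕ H. -/
def blk (A B C D : H →L[ℂ] H) : WithLp 2 (H × H) →L[ℂ] WithLp 2 (H × H) :=
  ((WithLp.prodContinuousLinearEquiv 2 ℂ H H).symm.toContinuousLinearMap).comp
    ((((A.comp (fst ℂ H H)) + B.comp (snd ℂ H H)).prod
      ((C.comp (fst ℂ H H)) + D.comp (snd ℂ H H))).comp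
      (WithLp.prodContinuousLinearEquiv 2 ℂ H H).toContinuousLinearMap)

/-!
Write `Q = |A|^{1/2}`, so that `A = U Q Q` and `⟪A x, x⟫ = ⟪Q x, Q U* x⟫`. After rotating by a
unimodular `μ`, `4 |⟪A x, x⟫| ≤ ‖Q x + μ Q U* x‖² = ‖L* x‖² ≤ ‖L‖²` with `L = μ̄ U Q + Q`, while
`‖L v‖² = ‖U Q v‖² + 2 Re (μ̄ ⟪Ã v, v⟫) + ‖Q v‖² ≤ 2 (‖A‖ + w(Ã)) ‖v‖²`, because `‖Q‖² = ‖A‖`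
and `U` is isometric on the closure of the range of `|A|`, which contains the range of `Q`.
Hence `w(A) ≤ (‖A‖ + w(Ã)) / 2`, and convexity of `t ↦ t ^ r` finishes the proof.
-/

open scoped InnerProductSpace

lemma Complex.exists_norm_eq_one_mul_eq_norm (z : ℂ) : ∃ μ : ℂ, ‖μ‖ = 1 ∧ μ * z = ‖z‖ := by
  refine ⟨exp (-(z.arg : ℂ) * I), by simpa using norm_exp_ofReal_mul_I (-z.arg), ?_⟩
  conv_lhs => rw [← norm_mul_exp_arg_mul_I z]
  rw [mul_left_comm, ← Complex.exp_add]
  simp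

lemma add_div_two_rpow_le {x y p : ℝ} (hx : 0 ≤ x) (hy : 0 ≤ y) (hp : 1 ≤ p) :
    ((x + y) / 2) ^ p ≤ (x ^ p + y ^ p) / 2 := by
  have h := (convexOn_rpow hp).2 (Set.mem_Ici.2 hx) (Set.mem_Ici.2 hy)
    (by norm_num : (0 : ℝ) ≤ 1 / 2) (by norm_num : (0 : ℝ) ≤ 1 / 2) (by norm_num)
  rw [smul_eq_mul, smul_eq_mul, smul_eq_mul, smul_eq_mul] at h
  rw [show (x + y) / 2 = 1 / 2 * x + 1 / 2 * y by ring]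
  linarith

lemma CFC.cfc_real_sqrt_eq_sqrt {𝒜 : Type*} [CStarAlgebra 𝒜] [PartialOrder 𝒜] [StarOrderedRing 𝒜]
    {a : 𝒜} (ha : 0 ≤ a) : cfc Real.sqrt a = CFC.sqrt a := by
  rw [CFC.sqrt_eq_real_sqrt a ha, cfcₙ_eq_cfc]

lemma oabs_eq_abs (A : H →L[ℂ] H) : oabs A = CFC.abs A := by
  rw [oabs, CFC.abs, ← star_eq_adjoint, CFC.cfc_real_sqrt_eq_sqrt (star_mul_self_nonneg A)]

section NumericalRadius

omit [CompleteSpace H]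

lemma nrad_bddAbove (T : H →L[ℂ] H) :
    BddAbove {r : ℝ | ∃ x : H, ‖x‖ = 1 ∧ r = ‖⟪T x, x⟫_ℂ‖} := by
  refine ⟨‖T‖, ?_⟩
  rintro r ⟨x, hx, rfl⟩
  calc ‖⟪T x, x⟫_ℂ‖ ≤ ‖T x‖ * ‖x‖ := norm_inner_le_norm _ _
    _ ≤ ‖T‖ * ‖x‖ * ‖x‖ := by gcongr; exact T.le_opNorm x
    _ = ‖T‖ := by rw [hx]; ring

lemma nrad_nonneg (T : H →L[ℂ] H) : 0 ≤ nrad T :=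
  Real.sSup_nonneg (by rintro r ⟨x, -, rfl⟩; positivity)

lemma nrad_le_of_forall {T : H →L[ℂ] H} {c : ℝ} (hc : 0 ≤ c)
    (h : ∀ x : H, ‖x‖ = 1 → ‖⟪T x, x⟫_ℂ‖ ≤ c) : nrad T ≤ c :=
  Real.sSup_le (by rintro r ⟨x, hx, rfl⟩; exact h x hx) hc

lemma norm_inner_le_nrad_mul_sq (T : H →L[ℂ] H) (y : H) :
    ‖⟪T y, y⟫_ℂ‖ ≤ nrad T * ‖y‖ ^ 2 := by
  rcases eq_or_ne y 0 with rfl | hy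
  · simp
  have hy' : 0 < ‖y‖ := norm_pos_iff.2 hy
  have hunit : ‖(‖y‖⁻¹ : ℂ) • y‖ = 1 := by simp [norm_smul, hy'.ne']
  have hle : ‖⟪T ((‖y‖⁻¹ : ℂ) • y), (‖y‖⁻¹ : ℂ) • y⟫_ℂ‖ ≤ nrad T :=
    le_csSup (nrad_bddAbove T) ⟨_, hunit, rfl⟩
  rw [map_smul, inner_smul_left, inner_smul_right, norm_mul, norm_mul] at hle
  simp only [RCLike.norm_conj, norm_inv, Complex.norm_real, norm_norm] at hle
  calc ‖⟪T y, y⟫_ℂ‖ = ‖y‖⁻¹ * (‖y‖⁻¹ * ‖⟪T y, y⟫_ℂ‖) * ‖y‖ ^ 2 := by field_simp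
    _ ≤ nrad T * ‖y‖ ^ 2 := by gcongr

end NumericalRadius

section SquareRootFactorization

variable {Q U : H →L[ℂ] H} {a : ℝ}

lemma norm_smul_mul_add_apply_sq_le (hQ : IsSelfAdjoint Q) (hUQ : ∀ v, ‖U (Q v)‖ ≤ ‖Q v‖)
    (ha : ‖Q‖ ^ 2 ≤ a) {ν : ℂ} (hν : ‖ν‖ = 1) (v : H) :
    ‖(ν • (U * Q) + Q) v‖ ^ 2 ≤ (2 * a + 2 * nrad (Q * U * Q)) * ‖v‖ ^ 2 := by
  have hQv : ‖Q v‖ ^ 2 ≤ a * ‖v‖ ^ 2 :=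
    calc ‖Q v‖ ^ 2 ≤ (‖Q‖ * ‖v‖) ^ 2 := by gcongr; exact Q.le_opNorm v
      _ ≤ a * ‖v‖ ^ 2 := by rw [mul_pow]; gcongr
  have hUQv : ‖ν • U (Q v)‖ ^ 2 ≤ a * ‖v‖ ^ 2 := by
    rw [norm_smul, hν, one_mul]
    exact (pow_le_pow_left₀ (norm_nonneg _) (hUQ v) 2).trans hQv
  have hcross : RCLike.re ⟪ν • U (Q v), Q v⟫_ℂ ≤ nrad (Q * U * Q) * ‖v‖ ^ 2 := by
    have h : ⟪U (Q v), Q v⟫_ℂ = ⟪(Q * U * Q) v, v⟫_ℂ := by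
      rw [← adjoint_inner_left, hQ.adjoint_eq]
      rfl
    calc RCLike.re ⟪ν • U (Q v), Q v⟫_ℂ ≤ ‖⟪ν • U (Q v), Q v⟫_ℂ‖ := RCLike.re_le_norm _
      _ = ‖⟪(Q * U * Q) v, v⟫_ℂ‖ := by rw [inner_smul_left, norm_mul, h]; simp [hν]
      _ ≤ nrad (Q * U * Q) * ‖v‖ ^ 2 := norm_inner_le_nrad_mul_sq _ v
  rw [add_apply, smul_apply, mul_apply_eq_comp, norm_add_sq (𝕜 := ℂ)]
  linarith

lemma four_mul_norm_inner_mul_mul_self_le (hQ : IsSelfAdjoint Q) {μ : ℂ} (x : H)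
    (hμ : μ * ⟪(U * Q * Q) x, x⟫_ℂ = ‖⟪(U * Q * Q) x, x⟫_ℂ‖) :
    4 * ‖⟪(U * Q * Q) x, x⟫_ℂ‖ ≤ ‖adjoint (star μ • (U * Q) + Q) x‖ ^ 2 := by
  set p := Q x
  set q := μ • Q (adjoint U x)
  have hc : RCLike.re ⟪p, q⟫_ℂ = ‖⟪(U * Q * Q) x, x⟫_ℂ‖ := by
    have h : ⟪(U * Q * Q) x, x⟫_ℂ = ⟪p, Q (adjoint U x)⟫_ℂ :=
      (adjoint_inner_right U _ x).symm.trans (hQ.isSymmetric _ _)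
    rw [inner_smul_right, ← h, hμ]
    exact Complex.ofReal_re _
  have hLx : adjoint (star μ • (U * Q) + Q) x = p + q := by
    have hL : adjoint (star μ • (U * Q) + Q) = Q + μ • (Q * adjoint U) := by
      simp only [← star_eq_adjoint, star_add, star_smul, star_mul, star_star, hQ.star_eq]
      abel
    rw [hL]
    rfl
  have hcs := re_inner_le_norm (𝕜 := ℂ) p q
  rw [hc] at hcs
  rw [hLx, norm_add_sq (𝕜 := ℂ), hc]
  nlinarith [sq_nonneg (‖p‖ - ‖q‖)]

lemma nrad_mul_mul_self_le (hQ : IsSelfAdjoint Q) (hUQ : ∀ v, ‖U (Q v)‖ ≤ ‖Q v‖)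
    (ha : ‖Q‖ ^ 2 ≤ a) : nrad (U * Q * Q) ≤ (a + nrad (Q * U * Q)) / 2 := by
  have ha₀ : 0 ≤ a := (sq_nonneg _).trans ha
  have hW₀ := nrad_nonneg (Q * U * Q)
  refine nrad_le_of_forall (by positivity) fun x hx => ?_
  obtain ⟨μ, hμ₁, hμ⟩ := Complex.exists_norm_eq_one_mul_eq_norm ⟪(U * Q * Q) x, x⟫_ℂ
  set L := star μ • (U * Q) + Q
  have hL : ‖L‖ ^ 2 ≤ 2 * a + 2 * nrad (Q * U * Q) := by
    have hb : 0 ≤ 2 * a + 2 * nrad (Q * U * Q) := by positivity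
    have hLv : ∀ v, ‖L v‖ ≤ √(2 * a + 2 * nrad (Q * U * Q)) * ‖v‖ := fun v => by
      rw [← Real.sqrt_sq (norm_nonneg v), ← Real.sqrt_mul hb]
      exact Real.le_sqrt_of_sq_le
        (norm_smul_mul_add_apply_sq_le hQ hUQ ha (by simpa using hμ₁) v)
    calc ‖L‖ ^ 2 ≤ √(2 * a + 2 * nrad (Q * U * Q)) ^ 2 := by
          gcongr; exact opNorm_le_bound _ (Real.sqrt_nonneg _) hLv
      _ = _ := Real.sq_sqrt hb
  have hLx : ‖adjoint L x‖ ≤ ‖L‖ := by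
    simpa [hx] using (adjoint L).le_opNorm x
  have := four_mul_norm_inner_mul_mul_self_le hQ x hμ
  nlinarith [norm_nonneg (adjoint L x)]

end SquareRootFactorization

section PolarDecomposition

lemma norm_abs_apply (A : H →L[ℂ] H) (v : H) : ‖CFC.abs A v‖ = ‖A v‖ := by
  rw [← sq_eq_sq₀ (norm_nonneg _) (norm_nonneg _), apply_norm_sq_eq_inner_adjoint_left,
    apply_norm_sq_eq_inner_adjoint_left, ← star_eq_adjoint, ← star_eq_adjoint,
    (CFC.abs_nonneg A).isSelfAdjoint.star_eq, ← mul_def, ← mul_def, CFC.abs_mul_abs]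

lemma norm_apply_eq_of_mem_orthogonal_ker_abs {A U : H →L[ℂ] H} (hU : A = U * CFC.abs A) {z : H}
    (hz : z ∈ (CFC.abs A).kerᗮ) : ‖U z‖ = ‖z‖ := by
  rw [orthogonal_ker, ← star_eq_adjoint, (CFC.abs_nonneg A).isSelfAdjoint.star_eq,
    ← SetLike.mem_coe, Submodule.topologicalClosure_coe] at hz
  have hrange : ((CFC.abs A).range : Set H) ⊆ {z | ‖U z‖ = ‖z‖} := by
    rintro _ ⟨w, rfl⟩
    change ‖U (CFC.abs A w)‖ = ‖CFC.abs A w‖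
    rw [norm_abs_apply]
    exact congrArg norm (DFunLike.congr_fun hU w).symm
  exact closure_minimal hrange (isClosed_eq (by fun_prop) continuous_norm) hz

lemma IsSelfAdjoint.apply_mem_orthogonal_ker_mul_self {Q : H →L[ℂ] H} (hQ : IsSelfAdjoint Q)
    (v : H) : Q v ∈ (Q * Q).kerᗮ := by
  refine (Submodule.mem_orthogonal _ _).2 fun u (hu : (Q * Q) u = 0) => ?_
  have hQu : Q u = 0 := by
    rw [← norm_eq_zero, ← sq_eq_zero_iff, apply_norm_sq_eq_inner_adjoint_left, hQ.adjoint_eq,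
      ← mul_def, hu, inner_zero_left, map_zero]
  rw [← adjoint_inner_left, hQ.adjoint_eq, hQu, inner_zero_left]

end PolarDecomposition

theorem stmt_3_general (A U : H →L[ℂ] H)
    (hU : A = U * oabs A)
    (r : ℝ) (hr : 1 ≤ r) :
    nrad A ^ r ≤ (1 / 2) * (‖A‖ ^ r
      + nrad (cfc Real.sqrt (oabs A) * U * cfc Real.sqrt (oabs A)) ^ r) := by
  rw [oabs_eq_abs] at hU ⊢
  rw [CFC.cfc_real_sqrt_eq_sqrt (CFC.abs_nonneg A)]
  set Q := CFC.sqrt (CFC.abs A)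
  have hQQ : Q * Q = CFC.abs A := CFC.sqrt_mul_sqrt_self _ (CFC.abs_nonneg A)
  have hQ : IsSelfAdjoint Q := (CFC.sqrt_nonneg _).isSelfAdjoint
  have hQnorm : ‖Q‖ ^ 2 = ‖A‖ := by
    rw [CFC.norm_sqrt _ (CFC.abs_nonneg A), CFC.norm_abs, Real.sq_sqrt (norm_nonneg _)]
  have hUQ (v : H) : ‖U (Q v)‖ ≤ ‖Q v‖ := by
    refine (norm_apply_eq_of_mem_orthogonal_ker_abs hU ?_).le
    rw [← hQQ]
    exact hQ.apply_mem_orthogonal_ker_mul_self v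
  have key : nrad A ≤ (‖A‖ + nrad (Q * U * Q)) / 2 :=
    calc nrad A = nrad (U * Q * Q) := by rw [mul_assoc, hQQ, ← hU]
      _ ≤ _ := nrad_mul_mul_self_le hQ hUQ hQnorm.le
  calc nrad A ^ r ≤ ((‖A‖ + nrad (Q * U * Q)) / 2) ^ r :=
        Real.rpow_le_rpow (nrad_nonneg A) key (by linarith)
    _ ≤ (‖A‖ ^ r + nrad (Q * U * Q) ^ r) / 2 :=
        add_div_two_rpow_le (norm_nonneg A) (nrad_nonneg _) hr
    _ = _ := by ring

theorem stmt_3 (A U : H →L[ℂ] H)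
    (hU : A = U * oabs A)
    (hker : LinearMap.ker (U : H →ₗ[ℂ] H) = (LinearMap.range (oabs A : H →ₗ[ℂ] H))ᗮ)
    (hiso : ∀ x ∈ (LinearMap.ker (U : H →ₗ[ℂ] H))ᗮ, ‖U x‖ = ‖x‖)
    (r : ℝ) (hr : 1 ≤ r) :
    nrad A ^ r ≤ (1 / 2) * (‖A‖ ^ r
      + nrad (cfc Real.sqrt (oabs A) * U * cfc Real.sqrt (oabs A)) ^ r) :=
  stmt_3_general A U hU r hr
end
end

section
/- Let X, Y, S, T be bounded linear operators on a complex Hilbert space. Then the spectral radius satisfies r(XY + ST) ≤ (1/2)(w(YX) + w(TS)) + (1/2)√((w(YX) − w(TS))² + 4‖YS‖‖TX‖). -/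
/-!
On `H ⊕ H` put `U = [[X, S], [0, 0]]` and `V = [[Y, 0], [T, 0]]`. Then
`UV = [[XY + ST, 0], [0, 0]]` and `VU = [[YX, YS], [TX, TS]]`, so every nonzero spectral value
of `XY + ST` lies in the spectrum of `VU`, hence is bounded by the numerical radius of `VU`.
For a unit vector `(x, y)` with `‖x‖ = p`, `‖y‖ = q`, the quantity `|⟪VU (x, y), (x, y)⟫|` is at
most `w(YX) p² + w(TS) q² + (‖YS‖ + ‖TX‖) p q`, whose maximum over `p² + q² = 1` is the top
eigenvalue of a real symmetric `2 × 2` matrix. Replacing `S, T` by `t S, t⁻¹ T` changes neither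
`XY + ST` nor `TS` and turns `‖YS‖ + ‖TX‖` into `t ‖YS‖ + t⁻¹ ‖TX‖`, whose infimum over `t > 0`
is `2 √(‖YS‖ ‖TX‖)`.
-/

noncomputable section
open ContinuousLinearMap

variable {H : Type*} [NormedAddCommGroup H] [InnerProductSpace ℂ H] [CompleteSpace H]

lemma quadratic_form_le_of_sq_add_sq_eq_one {a d s p q : ℝ} (hpq : p ^ 2 + q ^ 2 = 1) :
    a * p ^ 2 + d * q ^ 2 + s * p * q ≤ (1 / 2) * (a + d) + (1 / 2) * √((a - d) ^ 2 + s ^ 2) := by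
  set x := (a - d) * (p ^ 2 - q ^ 2) + 2 * s * p * q
  have hsq : (a - d) ^ 2 + s ^ 2 = x ^ 2 + (2 * (a - d) * p * q - s * (p ^ 2 - q ^ 2)) ^ 2 := by
    linear_combination (-((a - d) ^ 2 + s ^ 2) * (1 + p ^ 2 + q ^ 2)) * hpq
  have hx : x ≤ √((a - d) ^ 2 + s ^ 2) :=
    (le_abs_self x).trans (Real.abs_le_sqrt (by nlinarith))
  linear_combination (1 / 2) * hx + ((a + d) / 2) * hpq

lemma exists_pos_sq_mul_add_inv_mul_le {b c ε : ℝ} (hb : 0 ≤ b) (hc : 0 ≤ c) (hε : 0 < ε) :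
    ∃ t > 0, (t * b + t⁻¹ * c) ^ 2 ≤ 4 * (b + ε) * (c + ε) := by
  obtain ⟨β, hβ, hβb⟩ : ∃ β > 0, β ^ 2 = b + ε :=
    ⟨√(b + ε), by positivity, Real.sq_sqrt (by positivity)⟩
  obtain ⟨γ, hγ, hγc⟩ : ∃ γ > 0, γ ^ 2 = c + ε :=
    ⟨√(c + ε), by positivity, Real.sq_sqrt (by positivity)⟩
  rw [← hβb, ← hγc]
  refine ⟨γ / β, by positivity, ?_⟩
  have hle : (γ / β) * b + (γ / β)⁻¹ * c ≤ 2 * β * γ :=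
    calc (γ / β) * b + (γ / β)⁻¹ * c ≤ (γ / β) * β ^ 2 + (γ / β)⁻¹ * γ ^ 2 := by
          gcongr <;> linarith
      _ = 2 * β * γ := by field_simp; ring
  calc _ ≤ (2 * β * γ) ^ 2 := by gcongr
    _ = _ := by ring

lemma le_add_half_sqrt_of_forall_pos {r m e b c : ℝ} (hb : 0 ≤ b) (hc : 0 ≤ c)
    (h : ∀ t > 0, r ≤ m + (1 / 2) * √(e + (t * b + t⁻¹ * c) ^ 2)) :
    r ≤ m + (1 / 2) * √(e + 4 * b * c) := by
  have hlim : Filter.Tendsto (fun ε => m + (1 / 2) * √(e + 4 * (b + ε) * (c + ε)))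
      (nhdsWithin 0 (Set.Ioi 0)) (nhds (m + (1 / 2) * √(e + 4 * b * c))) := by
    refine tendsto_nhdsWithin_of_tendsto_nhds ?_
    simpa using (Continuous.tendsto (f := fun ε => m + (1 / 2) * √(e + 4 * (b + ε) * (c + ε)))
      (by fun_prop) 0)
  refine ge_of_tendsto hlim (eventually_nhdsWithin_of_forall fun ε (hε : 0 < ε) => ?_)
  obtain ⟨t, ht, hle⟩ := exists_pos_sq_mul_add_inv_mul_le hb hc hε
  exact (h t ht).trans (by gcongr)

lemma spectralRadius_toReal_le {𝕜 A : Type*} [NormedField 𝕜] [Ring A] [Algebra 𝕜 A]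
    {a : A} {R : ℝ} (hR : 0 ≤ R) (h : ∀ k ∈ spectrum 𝕜 a, ‖k‖ ≤ R) :
    (spectralRadius 𝕜 a).toReal ≤ R := by
  refine ENNReal.toReal_le_of_le_ofReal hR (iSup₂_le fun k hk => ?_)
  rw [← enorm_eq_nnnorm, ← ofReal_norm]
  exact ENNReal.ofReal_le_ofReal (h k hk)

section NumericalRadius

variable {E : Type*} [NormedAddCommGroup E] [InnerProductSpace ℂ E]

lemma nrad_nonneg_s4 (A : E →L[ℂ] E) : 0 ≤ nrad A :=
  Real.sSup_nonneg fun _ ⟨_, _, hr⟩ => hr ▸ norm_nonneg _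

lemma norm_inner_le_nrad (A : E →L[ℂ] E) {x : E} (hx : ‖x‖ = 1) :
    ‖(inner ℂ (A x) x : ℂ)‖ ≤ nrad A := by
  refine le_csSup ⟨‖A‖, ?_⟩ ⟨x, hx, rfl⟩
  rintro _ ⟨y, hy, rfl⟩
  calc ‖(inner ℂ (A y) y : ℂ)‖ ≤ ‖A y‖ * ‖y‖ := norm_inner_le_norm _ _
    _ ≤ ‖A‖ := by simpa [hy] using A.le_opNorm y

lemma norm_inner_le_nrad_mul_sq_s4 (A : E →L[ℂ] E) (x : E) :
    ‖(inner ℂ (A x) x : ℂ)‖ ≤ nrad A * ‖x‖ ^ 2 := by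
  rcases eq_or_ne x 0 with rfl | hx
  · simp
  have hx' : ‖x‖ ≠ 0 := norm_ne_zero_iff.mpr hx
  have h := norm_inner_le_nrad A (x := (‖x‖⁻¹ : ℂ) • x) (by simp [norm_smul, hx'])
  rw [map_smul, inner_smul_left, inner_smul_right, norm_mul, norm_mul] at h
  simp only [RCLike.norm_conj, norm_inv, Complex.norm_real, norm_norm] at h
  calc ‖(inner ℂ (A x) x : ℂ)‖ = ‖x‖ ^ 2 * (‖x‖⁻¹ * (‖x‖⁻¹ * ‖(inner ℂ (A x) x : ℂ)‖)) := by
        field_simp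
    _ ≤ nrad A * ‖x‖ ^ 2 := by rw [mul_comm]; gcongr

lemma norm_le_nrad_of_mem_spectrum [CompleteSpace E] {A : E →L[ℂ] E} {k : ℂ}
    (hk : k ∈ spectrum ℂ A) : ‖k‖ ≤ nrad A := by
  by_contra! hlt
  refine spectrum.mem_iff.mp hk <| isUnit_of_forall_le_norm_inner_map _
    (c := (‖k‖ - nrad A).toNNReal) (by simpa using hlt) fun x => ?_
  have hinner : (inner ℂ ((algebraMap ℂ (E →L[ℂ] E) k - A) x) x : ℂ)
      = (‖x‖ : ℂ) ^ 2 * (starRingEnd ℂ) k - inner ℂ (A x) x := by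
    simp [Algebra.algebraMap_eq_smul_one]
  rw [hinner, Real.coe_toNNReal _ (sub_nonneg.mpr hlt.le)]
  calc ‖x‖ ^ 2 * (‖k‖ - nrad A) ≤ ‖x‖ ^ 2 * ‖k‖ - ‖(inner ℂ (A x) x : ℂ)‖ := by
        linarith [norm_inner_le_nrad_mul_sq_s4 A x]
    _ ≤ _ := by
        have := norm_sub_norm_le ((‖x‖ : ℂ) ^ 2 * (starRingEnd ℂ) k) (inner ℂ (A x) x)
        rw [norm_mul, norm_pow, Complex.norm_real, norm_norm, RCLike.norm_conj] at this
        linarith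

end NumericalRadius

section Block

variable {E : Type*} [NormedAddCommGroup E] [InnerProductSpace ℂ E]

lemma blk_apply (A B C D : E →L[ℂ] E) (x : WithLp 2 (E × E)) :
    blk A B C D x = WithLp.toLp 2 (A x.fst + B x.snd, C x.fst + D x.snd) := rfl

lemma blk_mul_blk (A B C D A' B' C' D' : E →L[ℂ] E) :
    blk A B C D * blk A' B' C' D'
      = blk (A * A' + B * C') (A * B' + B * D') (C * A' + D * C') (C * B' + D * D') := by
  ext x : 1
  simp only [mul_apply_eq_comp, blk_apply, add_apply, map_add, WithLp.toLp_fst,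
    WithLp.toLp_snd]
  congr 2 <;> abel

lemma spectrum_subset_spectrum_blk [CompleteSpace E] (A D : E →L[ℂ] E) :
    spectrum ℂ A ⊆ spectrum ℂ (blk A 0 0 D) := by
  intro k hk
  rw [spectrum.mem_iff, isUnit_iff_bijective] at hk ⊢
  contrapose! hk
  set M := algebraMap ℂ _ k - blk A 0 0 D
  have hM : ∀ x y : E, M (WithLp.toLp 2 (x, y))
      = WithLp.toLp 2 (k • x - A x, k • y - D y) := fun x y => by
    simp only [M, Algebra.algebraMap_eq_smul_one, sub_apply, smul_apply, one_apply_eq_self,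
      blk_apply, WithLp.toLp_fst, WithLp.toLp_snd, zero_apply, add_zero, zero_add]
    rfl
  refine ⟨fun x y hxy => ?_, fun y => ?_⟩
  · have := congrArg WithLp.fst (hk.1 (a₁ := WithLp.toLp 2 (x, 0)) (a₂ := WithLp.toLp 2 (y, 0))
      (by simpa [hM, Algebra.algebraMap_eq_smul_one] using hxy))
    simpa using this
  · obtain ⟨z, hz⟩ := hk.2 (WithLp.toLp 2 (y, 0))
    refine ⟨z.fst, ?_⟩
    have := congrArg WithLp.fst hz
    simpa [M, Algebra.algebraMap_eq_smul_one, blk_apply] using this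

lemma nrad_blk_le (A B C D : E →L[ℂ] E) :
    nrad (blk A B C D) ≤ (1 / 2) * (nrad A + nrad D)
      + (1 / 2) * √((nrad A - nrad D) ^ 2 + (‖B‖ + ‖C‖) ^ 2) := by
  refine Real.sSup_le ?_ (by have := nrad_nonneg_s4 A; have := nrad_nonneg_s4 D; positivity)
  rintro _ ⟨v, hv, rfl⟩
  have hpq : ‖v.fst‖ ^ 2 + ‖v.snd‖ ^ 2 = 1 := by
    rw [← WithLp.prod_norm_sq_eq_of_L2, hv, one_pow]
  have hB : ‖(inner ℂ (B v.snd) v.fst : ℂ)‖ ≤ ‖B‖ * ‖v.fst‖ * ‖v.snd‖ := by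
    simpa [mul_right_comm] using (norm_inner_le_norm _ _).trans
      (mul_le_mul_of_nonneg_right (B.le_opNorm v.snd) (norm_nonneg v.fst))
  have hC : ‖(inner ℂ (C v.fst) v.snd : ℂ)‖ ≤ ‖C‖ * ‖v.fst‖ * ‖v.snd‖ :=
    (norm_inner_le_norm _ _).trans
      (mul_le_mul_of_nonneg_right (C.le_opNorm v.fst) (norm_nonneg v.snd))
  calc ‖(inner ℂ (blk A B C D v) v : ℂ)‖
      = ‖(inner ℂ (A v.fst) v.fst + inner ℂ (B v.snd) v.fst
          + (inner ℂ (C v.fst) v.snd + inner ℂ (D v.snd) v.snd) : ℂ)‖ := by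
        rw [WithLp.prod_inner_apply, blk_apply, WithLp.toLp_fst, WithLp.toLp_snd,
          inner_add_left, inner_add_left]
    _ ≤ nrad A * ‖v.fst‖ ^ 2 + nrad D * ‖v.snd‖ ^ 2 + (‖B‖ + ‖C‖) * ‖v.fst‖ * ‖v.snd‖ := by
        have := norm_inner_le_nrad_mul_sq_s4 A v.fst
        have := norm_inner_le_nrad_mul_sq_s4 D v.snd
        rw [← add_assoc]
        refine norm_add₄_le.trans ?_
        linarith
    _ ≤ _ := quadratic_form_le_of_sq_add_sq_eq_one hpq

end Block

section SpectralRadius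

variable {E : Type*} [NormedAddCommGroup E] [InnerProductSpace ℂ E] [CompleteSpace E]

lemma spectralRadius_mul_add_mul_le (X Y S T : E →L[ℂ] E) :
    (spectralRadius ℂ (X * Y + S * T)).toReal ≤ (1 / 2) * (nrad (Y * X) + nrad (T * S))
      + (1 / 2) * √((nrad (Y * X) - nrad (T * S)) ^ 2 + (‖Y * S‖ + ‖T * X‖) ^ 2) := by
  have hR : 0 ≤ (1 / 2) * (nrad (Y * X) + nrad (T * S))
      + (1 / 2) * √((nrad (Y * X) - nrad (T * S)) ^ 2 + (‖Y * S‖ + ‖T * X‖) ^ 2) := by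
    have := nrad_nonneg_s4 (Y * X); have := nrad_nonneg_s4 (T * S); positivity
  refine spectralRadius_toReal_le hR fun k hk => ?_
  rcases eq_or_ne k 0 with rfl | hk0
  · simpa using hR
  have hUV : k ∈ spectrum ℂ (blk X S 0 0 * blk Y 0 T 0) := by
    simpa [blk_mul_blk] using spectrum_subset_spectrum_blk _ 0 hk
  have hVU : k ∈ spectrum ℂ (blk Y 0 T 0 * blk X S 0 0) :=
    (spectrum.unit_mem_mul_comm (r := Units.mk0 k hk0)).mp hUV
  simp only [blk_mul_blk, mul_zero, add_zero] at hVU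
  exact (norm_le_nrad_of_mem_spectrum hVU).trans (nrad_blk_le _ _ _ _)

lemma spectralRadius_mul_add_mul_le_of_pos (X Y S T : E →L[ℂ] E) {t : ℝ} (ht : 0 < t) :
    (spectralRadius ℂ (X * Y + S * T)).toReal ≤ (1 / 2) * (nrad (Y * X) + nrad (T * S))
      + (1 / 2) * √((nrad (Y * X) - nrad (T * S)) ^ 2 + (t * ‖Y * S‖ + t⁻¹ * ‖T * X‖) ^ 2) := by
  have ht' : (t : ℂ) ≠ 0 := by exact_mod_cast ht.ne'
  have h := spectralRadius_mul_add_mul_le X Y ((t : ℂ) • S) ((t : ℂ)⁻¹ • T)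
  simp only [mul_smul_comm, smul_mul_assoc, smul_smul, mul_inv_cancel₀ ht', inv_mul_cancel₀ ht',
    one_smul, norm_smul, norm_inv, Complex.norm_real, Real.norm_of_nonneg ht.le] at h
  exact h

end SpectralRadius

theorem stmt_4 (X Y S T : H →L[ℂ] H) :
    (spectralRadius ℂ (X * Y + S * T)).toReal ≤
      (1 / 2) * (nrad (Y * X) + nrad (T * S))
      + (1 / 2) * Real.sqrt ((nrad (Y * X) - nrad (T * S)) ^ 2
          + 4 * ‖Y * S‖ * ‖T * X‖) :=
  le_add_half_sqrt_of_forall_pos (norm_nonneg _) (norm_nonneg _) fun _ ht =>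
    spectralRadius_mul_add_mul_le_of_pos X Y S T ht
end
end

section
/- Let A, B be normal bounded operators on a complex Hilbert space and r ≥ 1. Then ‖A + B‖^r ≤ 2^{r−1}·max(‖A‖^r, ‖B‖^r) + 2^{r−1}·‖AB‖^{r/2}. -/
noncomputable section
open ContinuousLinearMap

variable {H : Type*} [NormedAddCommGroup H] [InnerProductSpace ℂ H] [CompleteSpace H]

/-!
The core is Kittaneh's estimate `‖A + B‖ ≤ max ‖A‖ ‖B‖ + ‖A B‖^{1/2}`; the power `r` then follows
from convexity of `t ↦ t ^ r`. For normal `A` the functional calculus gives `A = U X` with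
`X = |A|^{1/2}` self-adjoint and `U U* = X² = |A|`. Hence `A + B = [U V] [X Y]*` for the row
operators `H ⊕ H → H`, and `‖[U V]‖² = ‖U U* + V V*‖ = ‖X² + Y²‖ = ‖[X Y]‖²`, so
`‖A + B‖ ≤ ‖[X Y]‖²`. Expanding `‖X u + Y v‖²` bounds this by `max ‖A‖ ‖B‖ + ‖X Y‖`, and
`‖X Y‖² = ρ(X² Y²) ≤ ‖|A| |B|‖ = ‖A B‖`, where `ρ` is the spectral radius.
-/

open scoped InnerProductSpace

lemma spectralRadius_mul_comm {𝕜 A : Type*} [NormedField 𝕜] [Ring A] [Algebra 𝕜 A] (a b : A) :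
    spectralRadius 𝕜 (a * b) = spectralRadius 𝕜 (b * a) := by
  suffices h : ∀ x y : A, spectralRadius 𝕜 (x * y) ≤ spectralRadius 𝕜 (y * x) from
    le_antisymm (h a b) (h b a)
  refine fun x y => iSup₂_le fun k hk => ?_
  rcases eq_or_ne k 0 with rfl | hk0
  · simp
  · have hk' : k ∈ spectrum 𝕜 (y * x) \ {0} := spectrum.nonzero_mul_comm (𝕜 := 𝕜) x y ▸ ⟨hk, hk0⟩
    exact le_iSup₂ (f := fun k (_ : k ∈ spectrum 𝕜 (y * x)) => (‖k‖₊ : ENNReal)) k hk'.1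

section CStarAlgebra
variable {𝓐 : Type*} [CStarAlgebra 𝓐]

lemma IsSelfAdjoint.sq_norm_mul_le {x y : 𝓐} (hx : IsSelfAdjoint x) (hy : IsSelfAdjoint y) :
    ‖x * y‖ ^ 2 ≤ ‖x * x * (y * y)‖ := by
  rcases subsingleton_or_nontrivial 𝓐 with h𝓐 | h𝓐
  · simp [Subsingleton.elim (x * y) 0]
  have hsa : IsSelfAdjoint (y * (x * x * y)) := by
    simpa [mul_assoc, hx.star_eq, hy.star_eq] using IsSelfAdjoint.star_mul_self (x * y)
  have h : ‖x * y‖ ^ 2 = ‖y * (x * x * y)‖ := by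
    rw [sq, ← CStarRing.norm_star_mul_self, star_mul, hx.star_eq, hy.star_eq]
    simp only [mul_assoc]
  rw [h, ← coe_nnnorm, ← coe_nnnorm, NNReal.coe_le_coe, ← ENNReal.coe_le_coe,
    ← hsa.spectralRadius_eq_nnnorm, spectralRadius_mul_comm, mul_assoc]
  exact spectrum.spectralRadius_le_nnnorm _

lemma norm_mul_eq_of_star_mul_self_eq {a b : 𝓐} (h : star a * a = star b * b) (c : 𝓐) :
    ‖a * c‖ = ‖b * c‖ := by
  refine (sq_eq_sq₀ (norm_nonneg _) (norm_nonneg _)).1 ?_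
  rw [sq, sq, ← CStarRing.norm_star_mul_self, ← CStarRing.norm_star_mul_self, star_mul, star_mul]
  simp only [← mul_assoc]
  rw [mul_assoc (star c), h, ← mul_assoc]

lemma norm_mul_eq_of_mul_star_self_eq {a b : 𝓐} (h : a * star a = b * star b) (c : 𝓐) :
    ‖c * a‖ = ‖c * b‖ := by
  have h' : star (star a) * star a = star (star b) * star b := by simpa using h
  rw [← norm_star, star_mul, norm_mul_eq_of_star_mul_self_eq h', ← star_mul, norm_star]

end CStarAlgebra

def sqrtNorm (z : ℂ) : ℂ := (√‖z‖ : ℝ)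

/-- At `0`, the junk value `0 / 0 = 0` is exactly the continuous extension. -/
def divSqrtNorm (z : ℂ) : ℂ := z / sqrtNorm z

@[fun_prop]
lemma continuous_sqrtNorm : Continuous sqrtNorm := by unfold sqrtNorm; fun_prop

lemma star_sqrtNorm (z : ℂ) : star (sqrtNorm z) = sqrtNorm z := Complex.conj_ofReal _

lemma sqrtNorm_mul_self (z : ℂ) : sqrtNorm z * sqrtNorm z = ‖z‖ := by
  rw [sqrtNorm, ← Complex.ofReal_mul, Real.mul_self_sqrt (norm_nonneg z)]

lemma norm_divSqrtNorm (z : ℂ) : ‖divSqrtNorm z‖ = √‖z‖ := by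
  rcases eq_or_ne z 0 with rfl | hz
  · simp [divSqrtNorm, sqrtNorm]
  · rw [divSqrtNorm, norm_div, sqrtNorm, Complex.norm_real,
      Real.norm_of_nonneg (Real.sqrt_nonneg _), Real.div_sqrt]

lemma divSqrtNorm_mul_sqrtNorm (z : ℂ) : divSqrtNorm z * sqrtNorm z = z := by
  rcases eq_or_ne z 0 with rfl | hz
  · simp [divSqrtNorm]
  · exact div_mul_cancel₀ z (by simpa [sqrtNorm] using hz)

@[fun_prop]
lemma continuous_divSqrtNorm : Continuous divSqrtNorm := by
  refine continuous_iff_continuousAt.2 fun z => ?_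
  rcases eq_or_ne z 0 with rfl | hz
  · have h : Filter.Tendsto (fun w : ℂ => √‖w‖) (nhds 0) (nhds 0) := by
      simpa using (by fun_prop : Continuous fun w : ℂ => √‖w‖).tendsto' 0 0 (by simp)
    simpa [ContinuousAt, divSqrtNorm, sqrtNorm] using
      squeeze_zero_norm (fun w => (norm_divSqrtNorm w).le) h
  · exact continuousAt_id.div continuous_sqrtNorm.continuousAt (by simpa [sqrtNorm] using hz)

section FunctionalCalculus
variable {𝓐 : Type*} [CStarAlgebra 𝓐] (a : 𝓐)

lemma isSelfAdjoint_cfc_sqrtNorm : IsSelfAdjoint (cfc sqrtNorm a) := by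
  rw [IsSelfAdjoint, ← cfc_star]
  simp only [star_sqrtNorm]

lemma cfc_divSqrtNorm_mul_star :
    cfc divSqrtNorm a * star (cfc divSqrtNorm a) = cfc sqrtNorm a * cfc sqrtNorm a := by
  rw [← cfc_star, ← cfc_mul _ _ a, ← cfc_mul _ _ a]
  refine cfc_congr fun z _ => ?_
  rw [RCLike.star_def, Complex.mul_conj', norm_divSqrtNorm, sqrtNorm_mul_self,
    ← Complex.ofReal_pow, Real.sq_sqrt (norm_nonneg z)]

variable [IsStarNormal a]

lemma cfc_divSqrtNorm_mul_cfc_sqrtNorm : cfc divSqrtNorm a * cfc sqrtNorm a = a := by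
  rw [← cfc_mul divSqrtNorm sqrtNorm a]
  simp only [divSqrtNorm_mul_sqrtNorm]
  exact cfc_id' ℂ a

lemma cfc_sqrtNorm_mul_self_sq :
    cfc sqrtNorm a * cfc sqrtNorm a * (cfc sqrtNorm a * cfc sqrtNorm a) = star a * a := by
  have h : star a * a = cfc (fun z : ℂ => star z * z) a := by
    rw [cfc_mul (star ·) (fun z => z) a, cfc_star_id (R := ℂ) a, cfc_id' ℂ a]
  rw [← cfc_mul _ _ a, ← cfc_mul _ _ a, h]
  refine cfc_congr fun z _ => ?_
  rw [sqrtNorm_mul_self, RCLike.star_def, Complex.conj_mul', sq]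

lemma star_mul_self_cfc_sqrtNorm_mul_self :
    star (cfc sqrtNorm a * cfc sqrtNorm a) * (cfc sqrtNorm a * cfc sqrtNorm a) = star a * a := by
  rw [star_mul, (isSelfAdjoint_cfc_sqrtNorm a).star_eq, cfc_sqrtNorm_mul_self_sq]

lemma sq_norm_cfc_sqrtNorm : ‖cfc sqrtNorm a‖ ^ 2 = ‖a‖ := by
  have hX := isSelfAdjoint_cfc_sqrtNorm a
  have h : (‖cfc sqrtNorm a‖ ^ 2) ^ 2 = ‖a‖ ^ 2 := by
    rw [sq, sq, ← CStarRing.norm_star_mul_self, hX.star_eq, ← CStarRing.norm_star_mul_self,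
      star_mul_self_cfc_sqrtNorm_mul_self, CStarRing.norm_star_mul_self, sq]
  exact (sq_eq_sq₀ (by positivity) (norm_nonneg a)).1 h

lemma sq_norm_cfc_sqrtNorm_mul_le (b : 𝓐) [IsStarNormal b] :
    ‖cfc sqrtNorm a * cfc sqrtNorm b‖ ^ 2 ≤ ‖a * b‖ := by
  refine ((isSelfAdjoint_cfc_sqrtNorm a).sq_norm_mul_le (isSelfAdjoint_cfc_sqrtNorm b)).trans_eq ?_
  have hb : cfc sqrtNorm b * cfc sqrtNorm b * star (cfc sqrtNorm b * cfc sqrtNorm b)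
      = b * star b := by
    rw [star_mul, (isSelfAdjoint_cfc_sqrtNorm b).star_eq, cfc_sqrtNorm_mul_self_sq,
      star_comm_self' b]
  rw [norm_mul_eq_of_star_mul_self_eq (star_mul_self_cfc_sqrtNorm_mul_self a),
    norm_mul_eq_of_mul_star_self_eq hb]

end FunctionalCalculus

section RowOperator
variable {𝕜 E F G : Type*} [RCLike 𝕜]
  [NormedAddCommGroup E] [InnerProductSpace 𝕜 E]
  [NormedAddCommGroup F] [InnerProductSpace 𝕜 F]
  [NormedAddCommGroup G] [InnerProductSpace 𝕜 G]

/-- The row operator `[P Q] : E ⊕₂ F → G`. -/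
def rowOp (P : E →L[𝕜] G) (Q : F →L[𝕜] G) : WithLp 2 (E × F) →L[𝕜] G :=
  P.coprod Q ∘L (WithLp.prodContinuousLinearEquiv 2 𝕜 E F).toContinuousLinearMap

variable (P : E →L[𝕜] G) (Q : F →L[𝕜] G)

@[simp]
lemma rowOp_apply (x : WithLp 2 (E × F)) : rowOp P Q x = P x.fst + Q x.snd := rfl

variable [CompleteSpace E] [CompleteSpace G]

lemma sq_norm_rowOp_apply_le (x : WithLp 2 (E × F)) :
    ‖rowOp P Q x‖ ^ 2 ≤ (max (‖P‖ ^ 2) (‖Q‖ ^ 2) + ‖adjoint P ∘L Q‖) * ‖x‖ ^ 2 := by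
  set u := x.fst
  set v := x.snd
  have hP : ‖P u‖ ^ 2 ≤ max (‖P‖ ^ 2) (‖Q‖ ^ 2) * ‖u‖ ^ 2 :=
    calc ‖P u‖ ^ 2 ≤ (‖P‖ * ‖u‖) ^ 2 := by gcongr; exact le_opNorm P u
      _ ≤ _ := by rw [mul_pow]; gcongr; exact le_max_left _ _
  have hQ : ‖Q v‖ ^ 2 ≤ max (‖P‖ ^ 2) (‖Q‖ ^ 2) * ‖v‖ ^ 2 :=
    calc ‖Q v‖ ^ 2 ≤ (‖Q‖ * ‖v‖) ^ 2 := by gcongr; exact le_opNorm Q v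
      _ ≤ _ := by rw [mul_pow]; gcongr; exact le_max_right _ _
  have hPQ : RCLike.re ⟪P u, Q v⟫_𝕜 ≤ ‖adjoint P ∘L Q‖ * ‖u‖ * ‖v‖ := by
    rw [← adjoint_inner_right]
    calc RCLike.re ⟪u, adjoint P (Q v)⟫_𝕜 ≤ ‖u‖ * ‖(adjoint P ∘L Q) v‖ :=
          (RCLike.re_le_norm _).trans (norm_inner_le_norm _ _)
      _ ≤ ‖u‖ * (‖adjoint P ∘L Q‖ * ‖v‖) := by gcongr; exact le_opNorm _ _
      _ = _ := by ring
  rw [rowOp_apply, norm_add_sq (𝕜 := 𝕜), WithLp.prod_norm_sq_eq_of_L2]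
  nlinarith [two_mul_le_add_sq ‖u‖ ‖v‖, norm_nonneg (adjoint P ∘L Q)]

lemma sq_norm_rowOp_le : ‖rowOp P Q‖ ^ 2 ≤ max (‖P‖ ^ 2) (‖Q‖ ^ 2) + ‖adjoint P ∘L Q‖ := by
  have hK : 0 ≤ max (‖P‖ ^ 2) (‖Q‖ ^ 2) + ‖adjoint P ∘L Q‖ := by positivity
  refine (Real.le_sqrt (norm_nonneg _) hK).1 (opNorm_le_bound _ (Real.sqrt_nonneg _) fun x => ?_)
  rw [← Real.sqrt_sq (norm_nonneg x), ← Real.sqrt_mul hK]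
  exact Real.le_sqrt_of_sq_le (sq_norm_rowOp_apply_le P Q x)

variable [CompleteSpace F]

lemma adjoint_rowOp : adjoint (rowOp P Q) =
    (WithLp.prodContinuousLinearEquiv 2 𝕜 E F).symm.toContinuousLinearMap ∘L
      (adjoint P).prod (adjoint Q) := by
  refine ((eq_adjoint_iff _ _).2 fun x y => ?_).symm
  simp [inner_add_right, adjoint_inner_left]

lemma rowOp_comp_adjoint_rowOp (R : E →L[𝕜] G) (S : F →L[𝕜] G) :
    rowOp P Q ∘L adjoint (rowOp R S) = P ∘L adjoint R + Q ∘L adjoint S := by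
  ext x
  simp [adjoint_rowOp]

lemma sq_norm_rowOp : ‖rowOp P Q‖ ^ 2 = ‖P ∘L adjoint P + Q ∘L adjoint Q‖ := by
  have h := norm_adjoint_comp_self (adjoint (rowOp P Q))
  rw [adjoint_adjoint, LinearIsometryEquiv.norm_map, rowOp_comp_adjoint_rowOp] at h
  rw [h, sq]

end RowOperator

lemma norm_add_le_max_add_sqrt_norm_mul (A B : H →L[ℂ] H) [IsStarNormal A] [IsStarNormal B] :
    ‖A + B‖ ≤ max ‖A‖ ‖B‖ + √‖A * B‖ := by
  set X := cfc sqrtNorm A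
  set Y := cfc sqrtNorm B
  set U := cfc divSqrtNorm A
  set V := cfc divSqrtNorm B
  have hX : adjoint X = X := (isSelfAdjoint_cfc_sqrtNorm A).adjoint_eq
  have hY : adjoint Y = Y := (isSelfAdjoint_cfc_sqrtNorm B).adjoint_eq
  have hsum : A + B = rowOp U V ∘L adjoint (rowOp X Y) := by
    rw [rowOp_comp_adjoint_rowOp, hX, hY, ← mul_def, ← mul_def, cfc_divSqrtNorm_mul_cfc_sqrtNorm,
      cfc_divSqrtNorm_mul_cfc_sqrtNorm]
  have hnorm : ‖rowOp U V‖ = ‖rowOp X Y‖ := by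
    refine (sq_eq_sq₀ (norm_nonneg (rowOp U V)) (norm_nonneg (rowOp X Y))).1 ?_
    rw [sq_norm_rowOp, sq_norm_rowOp, ← star_eq_adjoint, ← star_eq_adjoint, ← mul_def, ← mul_def,
      cfc_divSqrtNorm_mul_star, cfc_divSqrtNorm_mul_star, hX, hY, mul_def, mul_def]
  calc ‖A + B‖ ≤ ‖rowOp U V‖ * ‖adjoint (rowOp X Y)‖ := hsum ▸ opNorm_comp_le _ _
    _ = ‖rowOp X Y‖ ^ 2 := by rw [hnorm, LinearIsometryEquiv.norm_map, sq]
    _ ≤ max (‖X‖ ^ 2) (‖Y‖ ^ 2) + ‖adjoint X ∘L Y‖ := sq_norm_rowOp_le X Y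
    _ ≤ max ‖A‖ ‖B‖ + √‖A * B‖ := by
      rw [sq_norm_cfc_sqrtNorm, sq_norm_cfc_sqrtNorm, hX, ← mul_def]
      gcongr
      exact Real.le_sqrt_of_sq_le (sq_norm_cfc_sqrtNorm_mul_le A B)

lemma Real.rpow_add_le_mul_rpow_add_rpow {x y p : ℝ} (hx : 0 ≤ x) (hy : 0 ≤ y) (hp : 1 ≤ p) :
    (x + y) ^ p ≤ 2 ^ (p - 1) * (x ^ p + y ^ p) := by
  lift x to NNReal using hx
  lift y to NNReal using hy
  exact_mod_cast NNReal.rpow_add_le_mul_rpow_add_rpow x y hp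

theorem stmt_12 (A B : H →L[ℂ] H) (hA : IsStarNormal A) (hB : IsStarNormal B)
    (r : ℝ) (hr : 1 ≤ r) :
    ‖A + B‖ ^ r ≤ (2 : ℝ) ^ (r - 1) * max (‖A‖ ^ r) (‖B‖ ^ r)
      + (2 : ℝ) ^ (r - 1) * ‖A * B‖ ^ (r / 2) := by
  have := hA
  have := hB
  calc ‖A + B‖ ^ r ≤ (max ‖A‖ ‖B‖ + √‖A * B‖) ^ r := by
        gcongr
        exact norm_add_le_max_add_sqrt_norm_mul A B
    _ ≤ 2 ^ (r - 1) * (max ‖A‖ ‖B‖ ^ r + √‖A * B‖ ^ r) :=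
        Real.rpow_add_le_mul_rpow_add_rpow (by positivity) (by positivity) hr
    _ = _ := by
        rw [Real.rpow_max (norm_nonneg _) (norm_nonneg _) (by linarith), Real.sqrt_eq_rpow,
          ← Real.rpow_mul (norm_nonneg _), one_div_mul_eq_div, mul_add]
end
end
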